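/- Infinite variation criterion (comb domain): let W = Γ̄_{ℓ,r}(x + B) be reflected Brownian motion in the time-dependent interval [ℓ(·), r(·)] with decomposition W = x + B + Y. Suppose there is a strictly increasing sequence {s_k}_{k∈K} in [0,τ] and a constant c₁ < ∞ with min( r(s_{k+1}) − ℓ(s_k), r(s_k) − ℓ(s_{k+1}) ) ≤ c₁ (s_{k+1} − s_k)^{1/2} for all k, and ∑_k (s_{k+1} − s_k)^{1/2} = ∞. Then the total variation of Y on [0, τ] is almost surely infinite. -/

import Mathlib

/-!
On each step `[s_k, s_{k+1}]` one of the two corridors `r(s_{k+1}) - ℓ(s_k)` and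
`r(s_k) - ℓ(s_{k+1})` is at most `c₁ √Δ_k`. Since `W = x + B + Y` stays between `ℓ` and `r`, a
Brownian increment of size `(|c₁| + 1) √Δ_k` across the narrow corridor forces
`|Y(s_{k+1}) - Y(s_k)| ≥ √Δ_k`. By Brownian scaling this event has a probability `p > 0` that
does not depend on `k`, and the events for different steps are independent. With the weights
`m_k = √Δ_k / (1 + √τ) ∈ [0, 1]`, a Chernoff bound for independent events gives
`P(V(Y) ≤ N) ≤ exp (N - p/2 ∑ m_k)` for every block of consecutive steps, and the divergence of
`∑ √Δ_k` makes the right-hand side arbitrarily small.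
-/

open Set Filter MeasureTheory ProbabilityTheory

def Cadlag (f : ℝ → ℝ) : Prop :=
  ∀ t : ℝ, 0 ≤ t → ContinuousWithinAt f (Set.Ici t) t ∧
    (0 < t → ∃ l : ℝ, Filter.Tendsto f (nhdsWithin t (Set.Iio t)) (nhds l))

/-- The explicit functional `Ξ_{ℓ,r}(ψ)(t)` defining the extended Skorokhod map
`Γ̄_{ℓ,r}(ψ) = ψ - Ξ_{ℓ,r}(ψ)`. -/
noncomputable def Xi (l r ψ : ℝ → ℝ) (t : ℝ) : ℝ :=
  max (min (max (ψ 0 - r 0) 0) (sInf ((fun u => ψ u - l u) '' Set.Icc 0 t)))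
      (sSup ((fun s => min (ψ s - r s) (sInf ((fun u => ψ u - l u) '' Set.Icc s t)))
        '' Set.Icc 0 t))

def IsStandardBrownianMotion {Ω : Type*} [MeasureSpace Ω]
    (B : ℝ → Ω → ℝ) : Prop :=
  (∀ ω, B 0 ω = 0) ∧
  (∀ ω, Continuous fun t => B t ω) ∧
  (∀ t : ℝ, Measurable (B t)) ∧
  (∀ s t : ℝ, 0 ≤ s → s ≤ t →
    Measure.map (fun ω => B t ω - B s ω) ℙ =
      gaussianReal 0 (Real.toNNReal (t - s))) ∧
  (∀ n : ℕ, ∀ t : ℕ → ℝ, (∀ i, 0 ≤ t i) → Monotone t →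
    iIndepFun (m := fun _ : Fin n => (inferInstance : MeasurableSpace ℝ))
      (fun i ω => B (t (i + 1)) ω - B (t i) ω) ℙ)

open scoped ENNReal NNReal Topology
open Finset (range)

theorem IsCompact.bddAbove_image_of_isBoundedUnder {X α : Type*} [TopologicalSpace X]
    [SemilatticeSup α] [Nonempty α] {s : Set X} (hs : IsCompact s) {f : X → α}
    (hf : ∀ x ∈ s, (𝓝[s] x).IsBoundedUnder (· ≤ ·) f) :
    BddAbove (f '' s) := by
  refine hs.induction_on (p := fun t => BddAbove (f '' t)) (by simp)
    (fun t u htu hu => hu.mono (image_mono htu))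
    (fun t u ht hu => by rw [image_union]; exact ht.union hu) fun x hx => ?_
  obtain ⟨M, hM⟩ := hf x hx
  exact ⟨{y | f y ≤ M}, hM, M, by rintro _ ⟨y, hy, rfl⟩; exact hy⟩

theorem Cadlag.isBoundedUnder_le {f : ℝ → ℝ} (hf : Cadlag f) {x : ℝ} (hx : 0 ≤ x) :
    (𝓝[Ici 0] x).IsBoundedUnder (· ≤ ·) f := by
  obtain ⟨M₁, hM₁⟩ := (hf x hx).1.tendsto.isBoundedUnder_le
  rcases hx.eq_or_lt with rfl | hx
  · exact ⟨M₁, hM₁⟩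
  obtain ⟨L, hL⟩ := (hf x hx.le).2 hx
  obtain ⟨M₂, hM₂⟩ := hL.isBoundedUnder_le
  refine ⟨max M₁ M₂, nhdsWithin_le_nhds ?_⟩
  rw [← nhdsLT_sup_nhdsGE]
  exact ⟨hM₂.mono fun _ h => le_max_of_le_right h, hM₁.mono fun _ h => le_max_of_le_left h⟩

theorem Cadlag.bddAbove_image_Icc {f : ℝ → ℝ} (hf : Cadlag f) (T : ℝ) :
    BddAbove (f '' Icc 0 T) :=
  isCompact_Icc.bddAbove_image_of_isBoundedUnder fun _ hx =>
    (hf.isBoundedUnder_le hx.1).mono (nhdsWithin_mono _ Icc_subset_Ici_self)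

theorem Xi_mem_Icc {l r ψ : ℝ → ℝ} {t : ℝ} (hψ : BddBelow (ψ '' Icc 0 t))
    (hl : BddAbove (l '' Icc 0 t)) (hlr : l t ≤ r t) (ht : 0 ≤ t) :
    Xi l r ψ t ∈ Icc (ψ t - r t) (ψ t - l t) := by
  obtain ⟨a, ha⟩ := hψ
  obtain ⟨b, hb⟩ := hl
  have hinf_le : ∀ s ∈ Icc 0 t, sInf ((fun u => ψ u - l u) '' Icc s t) ≤ ψ t - l t := by
    refine fun s hs => csInf_le ⟨a - b, ?_⟩ ⟨t, ⟨hs.2, le_rfl⟩, rfl⟩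
    rintro _ ⟨u, hu, rfl⟩
    have hu' : u ∈ Icc 0 t := ⟨hs.1.trans hu.1, hu.2⟩
    linarith [ha (mem_image_of_mem ψ hu'), hb (mem_image_of_mem l hu')]
  have hsup_le : ∀ y ∈ (fun s => min (ψ s - r s) (sInf ((fun u => ψ u - l u) '' Icc s t))) ''
      Icc 0 t, y ≤ ψ t - l t := by
    rintro _ ⟨s, hs, rfl⟩
    exact (min_le_right _ _).trans (hinf_le s hs)
  constructor
  · refine le_max_of_le_right (le_csSup ⟨_, hsup_le⟩ ⟨t, ⟨ht, le_rfl⟩, ?_⟩)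
    simp only [Icc_self, image_singleton, csInf_singleton]
    exact min_eq_left (by linarith)
  · exact max_le ((min_le_right _ _).trans (hinf_le 0 ⟨le_rfl, ht⟩))
      (csSup_le ((nonempty_Icc.2 ht).image _) hsup_le)

def tailSet (up : Prop) [Decidable up] (b : ℝ) : Set ℝ := if up then Ici b else Iic (-b)

theorem measurableSet_tailSet (up : Prop) [Decidable up] (b : ℝ) :
    MeasurableSet (tailSet up b) := by
  unfold tailSet; split_ifs <;> measurability

theorem le_abs_sub_of_sub_mem_tailSet {ξ ψ l r : ℝ → ℝ} {u v c δ : ℝ}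
    (hu : ξ u ∈ Icc (ψ u - r u) (ψ u - l u)) (hv : ξ v ∈ Icc (ψ v - r v) (ψ v - l v))
    (hδ : 0 ≤ δ) (hmin : min (r v - l u) (r u - l v) ≤ c * δ)
    (hψ : ψ v - ψ u ∈ tailSet (r v - l u ≤ c * δ) ((|c| + 1) * δ)) :
    δ ≤ |ξ v - ξ u| := by
  have hc : c * δ ≤ |c| * δ := mul_le_mul_of_nonneg_right (le_abs_self c) hδ
  unfold tailSet at hψ
  split_ifs at hψ with hup
  · exact le_abs.2 (Or.inl (by linarith [hu.2, hv.1, mem_Ici.1 hψ]))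
  · have hdown := (min_le_iff.1 hmin).resolve_left hup
    exact le_abs.2 (Or.inr (by linarith [hu.1, hv.2, mem_Iic.1 hψ]))

theorem gaussianReal_tailSet_mul_sqrt {Δ : ℝ} (hΔ : 0 < Δ) (up : Prop) [Decidable up] (a : ℝ) :
    gaussianReal 0 Δ.toNNReal (tailSet up (a * √Δ)) = gaussianReal 0 1 (Ici a) := by
  have hscale : (gaussianReal 0 1).map (√Δ * ·) = gaussianReal 0 Δ.toNNReal := by
    rw [gaussianReal_map_const_mul, mul_zero]
    congr
    ext
    simp [Real.sq_sqrt hΔ.le, hΔ.le]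
  have hsqrt := Real.sqrt_pos.2 hΔ
  rw [← hscale, Measure.map_apply (measurable_const_mul _) (measurableSet_tailSet _ _)]
  unfold tailSet
  split_ifs
  · congr 1
    ext y
    simp [mul_comm a, hsqrt, mul_div_cancel_left₀ _ hsqrt.ne']
  · have hsymm : (gaussianReal 0 1).map (fun x => -x) = gaussianReal 0 1 := by
      simp [gaussianReal_map_neg]
    conv_rhs => rw [← hsymm, Measure.map_apply measurable_neg measurableSet_Ici]
    congr 1
    ext y
    simp [mul_comm a, hsqrt, ← mul_neg, mul_div_cancel_left₀ _ hsqrt.ne']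

theorem one_sub_mul_one_sub_exp_neg_le {q m : ℝ} (hq : q ∈ Icc 0 1) (hm : m ∈ Icc 0 1) :
    1 - q * (1 - Real.exp (-m)) ≤ Real.exp (-(q * m / 2)) := by
  have hexp : Real.exp (-m) * (1 + m) ≤ 1 := by
    rw [Real.exp_neg, inv_mul_le_iff₀ (Real.exp_pos m), mul_one, add_comm]
    exact Real.add_one_le_exp m
  have hhalf : m / 2 ≤ 1 - Real.exp (-m) := by
    nlinarith [Real.exp_pos (-m), hm.1, hm.2]
  linarith [Real.add_one_le_exp (-(q * m / 2)), mul_le_mul_of_nonneg_left hhalf hq.1]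

section Chernoff

variable {Ω : Type*} {mΩ : MeasurableSpace Ω} {μ : Measure Ω}

theorem mgf_indicator_const [IsProbabilityMeasure μ] {A : Set Ω} (hA : MeasurableSet A)
    (c t : ℝ) : mgf (A.indicator fun _ => c) μ t = 1 - μ.real A * (1 - Real.exp (t * c)) := by
  have hexp : (fun ω => Real.exp (t * A.indicator (fun _ => c) ω)) =
      fun ω => 1 - A.indicator (fun _ => 1 - Real.exp (t * c)) ω := by
    ext ω
    by_cases hω : ω ∈ A <;> simp [hω]
  rw [mgf, hexp, integral_sub (integrable_const _) ((integrable_const _).indicator hA),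
    integral_indicator_const _ hA]
  simp

theorem measureReal_sum_indicator_le_le_exp {ι β : Type*} [MeasurableSpace β]
    {X : ι → Ω → β} (hX : iIndepFun X μ) (hXm : ∀ i, Measurable (X i)) {S : ι → Set β}
    (hS : ∀ i, MeasurableSet (S i)) (s : Finset ι) {m : ι → ℝ} (hm : ∀ i ∈ s, m i ∈ Icc 0 1)
    (N : ℝ) :
    μ.real {ω | ∑ i ∈ s, (S i).indicator (fun _ => m i) (X i ω) ≤ N} ≤
      Real.exp (N - ∑ i ∈ s, μ.real (X i ⁻¹' S i) * m i / 2) := by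
  have := hX.isProbabilityMeasure
  set Y : ι → Ω → ℝ := fun i => (X i ⁻¹' S i).indicator fun _ => m i
  have hYX : ∀ i, Y i = (S i).indicator (fun _ => m i) ∘ X i := fun i => rfl
  have hY : iIndepFun Y μ := hX.comp _ fun i => measurable_const.indicator (hS i)
  have hYm : ∀ i, Measurable (Y i) := fun i => measurable_const.indicator ((hXm i) (hS i))
  have hsum_nonneg : ∀ ω, 0 ≤ ∑ i ∈ s, Y i ω := fun ω =>
    Finset.sum_nonneg fun i hi => Set.indicator_nonneg (fun _ _ => (hm i hi).1) ω
  have hint : Integrable (fun ω => Real.exp (-1 * (∑ i ∈ s, Y i) ω)) μ := by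
    refine Integrable.of_bound (by fun_prop) 1 (ae_of_all _ fun ω => ?_)
    simp only [Finset.sum_apply, Real.norm_eq_abs, Real.abs_exp]
    exact Real.exp_le_one_iff.2 (by linarith [hsum_nonneg ω])
  calc μ.real {ω | ∑ i ∈ s, (S i).indicator (fun _ => m i) (X i ω) ≤ N}
      = μ.real {ω | (∑ i ∈ s, Y i) ω ≤ N} := by
        simp only [Finset.sum_apply, hYX, Function.comp]
    _ ≤ Real.exp (-(-1) * N) * mgf (∑ i ∈ s, Y i) μ (-1) :=
        measure_le_le_exp_mul_mgf N (by norm_num) hint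
    _ = Real.exp N * ∏ i ∈ s, (1 - μ.real (X i ⁻¹' S i) * (1 - Real.exp (-m i))) := by
        rw [hY.mgf_sum hYm]
        simp [Y, mgf_indicator_const ((hXm _) (hS _))]
    _ ≤ Real.exp N * ∏ i ∈ s, Real.exp (-(μ.real (X i ⁻¹' S i) * m i / 2)) := by
        gcongr with i hi
        · intro i _
          nlinarith [measureReal_nonneg (μ := μ) (s := X i ⁻¹' S i),
            measureReal_le_one (μ := μ) (s := X i ⁻¹' S i), Real.exp_pos (-m i)]
        · exact one_sub_mul_one_sub_exp_neg_le ⟨measureReal_nonneg, measureReal_le_one⟩ (hm i hi)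
    _ = Real.exp (N - ∑ i ∈ s, μ.real (X i ⁻¹' S i) * m i / 2) := by
        rw [← Real.exp_sum, ← Real.exp_add, Finset.sum_neg_distrib, sub_eq_add_neg]

end Chernoff

theorem tendsto_exp_sub_mul_atTop {p : ℝ} (hp : 0 < p) (N : ℝ) :
    Tendsto (fun M : ℝ => Real.exp (N - p * M / 2)) atTop (𝓝 0) := by
  simp_rw [sub_eq_add_neg]
  exact Real.tendsto_exp_atBot.comp <| tendsto_atBot_add_const_left _ N <|
    tendsto_neg_atTop_atBot.comp <| (tendsto_id.const_mul_atTop hp).atTop_div_const two_pos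

theorem ae_eq_top_of_forall_measure_le_eq_zero {Ω : Type*} [MeasurableSpace Ω] {μ : Measure Ω}
    {f : Ω → ℝ≥0∞} (h : ∀ N : ℝ≥0, μ {ω | f ω ≤ N} = 0) : ∀ᵐ ω ∂μ, f ω = ⊤ := by
  rw [ae_iff]
  refine measure_mono_null (fun ω hω => ?_) (measure_iUnion_null fun N : ℕ => h N)
  obtain ⟨N, hN⟩ := ENNReal.exists_nat_gt hω
  exact mem_iUnion.2 ⟨N, by simpa using hN.le⟩

theorem exists_block_le_sum_of_tsum_eq_top {K : Set ℤ} (hK : K.OrdConnected) {f : ℤ → ℝ}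
    (hf : ∀ k, 0 ≤ f k)
    (h : ∑' k : {k : ℤ // k ∈ K ∧ k + 1 ∈ K}, ENNReal.ofReal (f k) = ⊤) (M : ℝ) :
    ∃ (k₀ : ℤ) (n : ℕ), (∀ j ≤ n, k₀ + j ∈ K) ∧ M ≤ ∑ j ∈ range n, f (k₀ + j) := by
  obtain ⟨T, hT⟩ : ∃ T : Finset {k : ℤ // k ∈ K ∧ k + 1 ∈ K},
      ENNReal.ofReal M < ∑ k ∈ T, ENNReal.ofReal (f k) := by
    have hM : ENNReal.ofReal M < ∑' k : {k : ℤ // k ∈ K ∧ k + 1 ∈ K}, ENNReal.ofReal (f k) :=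
      h ▸ ENNReal.ofReal_lt_top
    rw [ENNReal.tsum_eq_iSup_sum] at hM
    exact lt_iSup_iff.1 hM
  classical
  set T' : Finset ℤ := T.map (Function.Embedding.subtype _)
  have hT'K : ∀ k ∈ T', k ∈ K ∧ k + 1 ∈ K := by
    simp only [T', Finset.mem_map, Function.Embedding.coe_subtype]
    rintro _ ⟨k, -, rfl⟩
    exact k.2
  have hT' : T'.Nonempty := Finset.map_nonempty.2 (Finset.nonempty_of_sum_ne_zero (ne_bot_of_gt hT))
  set k₀ := T'.min' hT'
  set k₁ := T'.max' hT'
  set n := (k₁ + 1 - k₀).toNat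
  have hk₀₁ : k₀ ≤ k₁ := T'.min'_le _ (T'.max'_mem hT')
  refine ⟨k₀, n, fun j hj => ?_, ?_⟩
  · exact hK.out (hT'K k₀ (T'.min'_mem hT')).1 (hT'K k₁ (T'.max'_mem hT')).2 ⟨by omega, by omega⟩
  have hsub : T' ⊆ (range n).image fun j : ℕ => k₀ + j := fun k hk => by
    have := T'.min'_le k hk
    have := T'.le_max' k hk
    exact Finset.mem_image.2 ⟨(k - k₀).toNat, Finset.mem_range.2 (by omega), by omega⟩
  have hle : ENNReal.ofReal M < ENNReal.ofReal (∑ j ∈ range n, f (k₀ + j)) := by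
    calc ENNReal.ofReal M < ∑ k ∈ T', ENNReal.ofReal (f k) := by simpa [T'] using hT
      _ ≤ ∑ k ∈ (range n).image (fun j : ℕ => k₀ + j), ENNReal.ofReal (f k) :=
          Finset.sum_le_sum_of_subset hsub
      _ = ENNReal.ofReal (∑ j ∈ range n, f (k₀ + j)) := by
          rw [Finset.sum_image fun i _ j _ hij => by simpa using hij,
            ENNReal.ofReal_sum_of_nonneg fun j _ => hf _]
  exact (ENNReal.ofReal_lt_ofReal_iff'.1 hle).1.le

theorem MonotoneOn.exists_monotone_eq_on_block {K : Set ℤ} {s : ℤ → ℝ} (hs : MonotoneOn s K)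
    {k₀ : ℤ} {n : ℕ} (hK : ∀ j ≤ n, k₀ + j ∈ K) :
    ∃ t : ℕ → ℝ, Monotone t ∧ (∀ j, t j ∈ s '' K) ∧ ∀ j ≤ n, t j = s (k₀ + j) := by
  have hmem : ∀ j, k₀ + ((min j n : ℕ) : ℤ) ∈ K := fun j => hK _ (min_le_right _ _)
  refine ⟨fun j => s (k₀ + (min j n : ℕ)), fun i j hij => ?_, fun j => ⟨_, hmem j, rfl⟩,
    fun j hj => by simp [min_eq_left hj]⟩
  exact hs (hmem i) (hmem j) (by simpa using min_le_min_right n hij)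

theorem sqrt_le_abs_sub_Xi {l r ψ : ℝ → ℝ} (hl : Cadlag l) (hψ : Continuous ψ)
    (hlr : ∀ t, 0 ≤ t → l t ≤ r t) {u v c : ℝ} (hu : 0 ≤ u) (huv : u ≤ v)
    (hmin : min (r v - l u) (r u - l v) ≤ c * √(v - u))
    (hψuv : ψ v - ψ u ∈ tailSet (r v - l u ≤ c * √(v - u)) ((|c| + 1) * √(v - u))) :
    √(v - u) ≤ |Xi l r ψ v - Xi l r ψ u| := by
  have hXi : ∀ t, 0 ≤ t → Xi l r ψ t ∈ Icc (ψ t - r t) (ψ t - l t) := fun t ht =>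
    Xi_mem_Icc (isCompact_Icc.bddBelow_image hψ.continuousOn) (hl.bddAbove_image_Icc t)
      (hlr t ht) ht
  exact le_abs_sub_of_sub_mem_tailSet (hXi u hu) (hXi v (hu.trans huv)) (Real.sqrt_nonneg _) hmin
    hψuv

namespace IsStandardBrownianMotion

variable {Ω : Type*} [MeasureSpace Ω] {B : ℝ → Ω → ℝ}

theorem isProbabilityMeasure (hB : IsStandardBrownianMotion B) :
    IsProbabilityMeasure (ℙ : Measure Ω) :=
  (hB.2.2.2.2 0 (fun _ => 0) (fun _ => le_rfl) monotone_const).isProbabilityMeasure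

theorem measureReal_sub_mem_tailSet (hB : IsStandardBrownianMotion B) {u v : ℝ} (hu : 0 ≤ u)
    (huv : u < v) (up : Prop) [Decidable up] (a : ℝ) :
    (ℙ : Measure Ω).real {ω | B v ω - B u ω ∈ tailSet up (a * √(v - u))} =
      (gaussianReal 0 1 (Ici a)).toReal := by
  obtain ⟨-, -, hBm, hBinc, -⟩ := hB
  rw [measureReal_def, ← gaussianReal_tailSet_mul_sqrt (sub_pos.2 huv) up a, ← hBinc u v hu huv.le,
    Measure.map_apply (show Measurable fun ω => B v ω - B u ω from (hBm v).sub (hBm u))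
      (measurableSet_tailSet _ _)]
  rfl

theorem measureReal_eVariationOn_le_le_exp (hB : IsStandardBrownianMotion B)
    {Z : Ω → ℝ → ℝ} {I : Set ℝ} {t : ℕ → ℝ} (ht0 : ∀ j, 0 ≤ t j) (ht : Monotone t)
    (htI : ∀ j, t j ∈ I) {n : ℕ} {S : ℕ → Set ℝ} (hS : ∀ j, MeasurableSet (S j)) {m : ℕ → ℝ}
    (hm : ∀ j < n, m j ∈ Icc 0 1)
    (hZ : ∀ j < n, ∀ ω, B (t (j + 1)) ω - B (t j) ω ∈ S j →
      m j ≤ |Z ω (t (j + 1)) - Z ω (t j)|) (N : ℝ≥0) :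
    (ℙ : Measure Ω).real {ω | eVariationOn (Z ω) I ≤ N} ≤
      Real.exp (N - ∑ j ∈ range n,
        (ℙ : Measure Ω).real {ω | B (t (j + 1)) ω - B (t j) ω ∈ S j} * m j / 2) := by
  have := hB.isProbabilityMeasure
  obtain ⟨-, -, hBm, -, hBind⟩ := hB
  have hsub : {ω | eVariationOn (Z ω) I ≤ N} ⊆ {ω | ∑ j : Fin n,
      (S j).indicator (fun _ => m j) (B (t (j + 1)) ω - B (t j) ω) ≤ N} := fun ω hω => by
    have hvar : ENNReal.ofReal (∑ j ∈ range n, |Z ω (t (j + 1)) - Z ω (t j)|) ≤ N := by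
      rw [ENNReal.ofReal_sum_of_nonneg fun _ _ => abs_nonneg _]
      simp_rw [← Real.dist_eq, ← edist_dist]
      exact (eVariationOn.sum_le ht htI).trans hω
    rw [← ENNReal.ofReal_coe_nnreal, ENNReal.ofReal_le_ofReal_iff N.coe_nonneg] at hvar
    simp only [mem_ofPred_eq, Fin.sum_univ_eq_sum_range
      (fun j => (S j).indicator (fun _ => m j) (B (t (j + 1)) ω - B (t j) ω))]
    refine le_trans (Finset.sum_le_sum fun j hj => ?_) hvar
    by_cases hmem : B (t (j + 1)) ω - B (t j) ω ∈ S j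
    · simpa [hmem] using hZ j (Finset.mem_range.1 hj) ω hmem
    · simp [hmem]
  calc (ℙ : Measure Ω).real {ω | eVariationOn (Z ω) I ≤ N}
      ≤ (ℙ : Measure Ω).real {ω | ∑ j : Fin n,
          (S j).indicator (fun _ => m j) (B (t (j + 1)) ω - B (t j) ω) ≤ N} :=
        measureReal_mono hsub
    _ ≤ _ := measureReal_sum_indicator_le_le_exp (hBind n t ht0 ht)
        (fun j => (hBm _).sub (hBm _)) (fun j => hS j) Finset.univ (m := fun j => m j)
        (fun j _ => hm j j.2) N
    _ = _ := by
        congr 2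
        exact Fin.sum_univ_eq_sum_range
          (fun j => (ℙ : Measure Ω).real {ω | B (t (j + 1)) ω - B (t j) ω ∈ S j} * m j / 2) n

theorem ae_eVariationOn_eq_top (hB : IsStandardBrownianMotion B) {Z : Ω → ℝ → ℝ}
    {I : Set ℝ} {K : Set ℤ} {s : ℤ → ℝ} (hs : MonotoneOn s K) (hsI : ∀ k ∈ K, s k ∈ I ∩ Ici 0)
    {S : ℤ → Set ℝ} (hS : ∀ k, MeasurableSet (S k)) {m : ℤ → ℝ}
    (hm : ∀ k ∈ K, k + 1 ∈ K → m k ∈ Icc 0 1) {p : ℝ} (hp : 0 < p)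
    (hprob : ∀ k ∈ K, k + 1 ∈ K →
      p ≤ (ℙ : Measure Ω).real {ω | B (s (k + 1)) ω - B (s k) ω ∈ S k})
    (hZ : ∀ k ∈ K, k + 1 ∈ K → ∀ ω, B (s (k + 1)) ω - B (s k) ω ∈ S k →
      m k ≤ |Z ω (s (k + 1)) - Z ω (s k)|)
    (hblocks : ∀ M, ∃ (k₀ : ℤ) (n : ℕ), (∀ j ≤ n, k₀ + j ∈ K) ∧ M ≤ ∑ j ∈ range n, m (k₀ + j)) :
    ∀ᵐ ω, eVariationOn (Z ω) I = ⊤ := by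
  have := hB.isProbabilityMeasure
  refine ae_eq_top_of_forall_measure_le_eq_zero fun N => ?_
  have hbound : ∀ M, (ℙ : Measure Ω).real {ω | eVariationOn (Z ω) I ≤ N} ≤
      Real.exp (N - p * M / 2) := fun M => by
    obtain ⟨k₀, n, hK, hM⟩ := hblocks M
    obtain ⟨t, ht, htK, hts⟩ := hs.exists_monotone_eq_on_block hK
    have htI : ∀ j, t j ∈ I ∩ Ici 0 := fun j => by
      obtain ⟨k, hk, hkt⟩ := htK j
      exact hkt ▸ hsI k hk
    have hblock : ∀ j < n, (k₀ + j ∈ K ∧ k₀ + j + 1 ∈ K) ∧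
        t j = s (k₀ + j) ∧ t (j + 1) = s (k₀ + j + 1) := fun j hj => by
      have h₁ := hK (j + 1) hj
      have h₁' := hts (j + 1) hj
      push_cast [← add_assoc] at h₁ h₁'
      exact ⟨⟨hK j hj.le, h₁⟩, hts j hj.le, h₁'⟩
    refine (hB.measureReal_eVariationOn_le_le_exp (fun j => (htI j).2) ht (fun j => (htI j).1)
      (n := n) (S := fun j => S (k₀ + j)) (m := fun j => m (k₀ + j)) (fun j => hS _)
      (fun j hj => hm _ (hblock j hj).1.1 (hblock j hj).1.2) (fun j hj ω hω => ?_) N).trans ?_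
    · obtain ⟨⟨hk, hk₁⟩, ht₀, ht₁⟩ := hblock j hj
      rw [ht₀, ht₁] at hω ⊢
      exact hZ _ hk hk₁ ω hω
    refine Real.exp_le_exp.2 (sub_le_sub_left ?_ _)
    calc p * M / 2 ≤ p * (∑ j ∈ range n, m (k₀ + j)) / 2 := by gcongr
      _ = ∑ j ∈ range n, p * m (k₀ + j) / 2 := by rw [Finset.mul_sum, Finset.sum_div]
      _ ≤ _ := Finset.sum_le_sum fun j hj => by
        obtain ⟨⟨hk, hk₁⟩, ht₀, ht₁⟩ := hblock j (Finset.mem_range.1 hj)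
        have := hprob _ hk hk₁
        rw [← ht₀, ← ht₁] at this
        gcongr
        exact (hm _ hk hk₁).1
  have hle := ge_of_tendsto' (tendsto_exp_sub_mul_atTop hp N) hbound
  exact (measureReal_eq_zero_iff (measure_ne_top _ _)).1 (hle.antisymm measureReal_nonneg)

end IsStandardBrownianMotion

theorem local_time_infinite_variation_comb_general
    {Ω : Type*} [MeasureSpace Ω]
    (B : ℝ → Ω → ℝ) (hB : IsStandardBrownianMotion B)
    (l r : ℝ → ℝ) (hl : Cadlag l)
    (hlr : ∀ t : ℝ, 0 ≤ t → l t ≤ r t)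
    (x : ℝ) (Y : Ω → ℝ → ℝ)
    (hY : ∀ ω t, Y ω t = -(Xi l r (fun u => x + B u ω) t))
    (τ : ℝ)
    (K : Set ℤ) (hK : K.OrdConnected) (s : ℤ → ℝ)
    (hs : StrictMonoOn s K) (hsτ : ∀ k ∈ K, s k ∈ Set.Icc 0 τ)
    (c₁ : ℝ)
    (hmin : ∀ k : ℤ, k ∈ K → k + 1 ∈ K →
      min (r (s (k + 1)) - l (s k)) (r (s k) - l (s (k + 1)))
        ≤ c₁ * Real.sqrt (s (k + 1) - s k))
    (hsum : ∑' k : {k : ℤ // k ∈ K ∧ k + 1 ∈ K},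
        ENNReal.ofReal (Real.sqrt (s ((k : ℤ) + 1) - s (k : ℤ))) = ⊤) :
    ∀ᵐ ω ∂(ℙ : Measure Ω), eVariationOn (Y ω) (Set.Icc 0 τ) = ⊤ := by
  have hΔ : ∀ k ∈ K, k + 1 ∈ K → s k < s (k + 1) ∧ √(s (k + 1) - s k) ≤ 1 + √τ :=
    fun k hk hk₁ => ⟨hs hk hk₁ (lt_add_one k), (Real.sqrt_le_sqrt (by
      linarith [(hsτ k hk).1, (hsτ _ hk₁).2])).trans (le_add_of_nonneg_left zero_le_one)⟩
  have hC : 1 ≤ 1 + √τ := le_add_of_nonneg_right (Real.sqrt_nonneg τ)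
  have hp : 0 < (gaussianReal 0 1 (Ici (|c₁| + 1))).toReal :=
    ENNReal.toReal_pos (fun h => by simpa using gaussianReal_absolutelyContinuous' 0 one_ne_zero h)
      (measure_ne_top _ _)
  set m : ℤ → ℝ := fun k => (1 + √τ)⁻¹ * √(s (k + 1) - s k)
  set S : ℤ → Set ℝ := fun k => tailSet (r (s (k + 1)) - l (s k) ≤ c₁ * √(s (k + 1) - s k))
    ((|c₁| + 1) * √(s (k + 1) - s k))
  have hm : ∀ k ∈ K, k + 1 ∈ K → m k ∈ Icc 0 1 := fun k hk hk₁ =>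
    ⟨by positivity, inv_mul_le_one_of_le₀ (hΔ k hk hk₁).2 (by positivity)⟩
  have hZ : ∀ k ∈ K, k + 1 ∈ K → ∀ ω, B (s (k + 1)) ω - B (s k) ω ∈ S k →
      m k ≤ |Y ω (s (k + 1)) - Y ω (s k)| := fun k hk hk₁ ω hω => by
    rw [hY, hY, neg_sub_neg, abs_sub_comm]
    exact (mul_le_of_le_one_left (Real.sqrt_nonneg _) (inv_le_one_of_one_le₀ hC)).trans
      (sqrt_le_abs_sub_Xi hl (continuous_const.add (hB.2.1 ω)) hlr (hsτ k hk).1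
        (hΔ k hk hk₁).1.le (hmin k hk hk₁) (by simpa using hω))
  have hm_sum : ∑' k : {k : ℤ // k ∈ K ∧ k + 1 ∈ K}, ENNReal.ofReal (m k) = ⊤ := by
    simp_rw [m, ENNReal.ofReal_mul (inv_nonneg.2 (zero_le_one.trans hC)), ENNReal.tsum_mul_left,
      hsum]
    exact ENNReal.mul_top (by simpa using zero_lt_one.trans_le hC)
  exact hB.ae_eVariationOn_eq_top hs.monotoneOn (fun k hk => ⟨hsτ k hk, (hsτ k hk).1⟩)
    (fun k => measurableSet_tailSet _ _) hm hp
    (fun k hk hk₁ => (hB.measureReal_sub_mem_tailSet (hsτ k hk).1 (hΔ k hk hk₁).1 _ _).ge) hZ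
    (exists_block_le_sum_of_tsum_eq_top hK (fun k => by positivity) hm_sum)

/-- Infinite-variation criterion (comb domains): let `W = Γ̄_{ℓ,r}(x + B)` be reflected
Brownian motion in the time-dependent interval `[ℓ(·), r(·)]`, with local time
`Y = W - x - B = -Ξ_{ℓ,r}(x + B)`, and let `τ` be the first time the two boundaries
(or their left limits) touch. If there are a constant `c₁` and a strictly increasing
sequence `{s_k}_{k ∈ K}` in `[0, τ]`, indexed by a set `K` of consecutive integers,
such that `min(r(s_{k+1}) - ℓ(s_k), r(s_k) - ℓ(s_{k+1})) ≤ c₁ √(s_{k+1} - s_k)` for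
all `k` with `k, k+1 ∈ K`, and `∑_k √(s_{k+1} - s_k) = ∞`, then the total variation
of `Y` on `[0, τ]` is almost surely infinite. -/
theorem local_time_infinite_variation_comb
    {Ω : Type*} [MeasureSpace Ω] [IsProbabilityMeasure (ℙ : Measure Ω)]
    (B : ℝ → Ω → ℝ) (hB : IsStandardBrownianMotion B)
    (l r : ℝ → ℝ) (hl : Cadlag l) (hr : Cadlag r)
    (hlr : ∀ t : ℝ, 0 ≤ t → l t ≤ r t)
    (x : ℝ) (Y : Ω → ℝ → ℝ)
    (hY : ∀ ω t, Y ω t = -(Xi l r (fun u => x + B u ω) t))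
    (τ : ℝ)
    (hτset : {t : ℝ | 0 < t ∧ (r t = l t ∨ Function.leftLim r t = Function.leftLim l t)}.Nonempty)
    (hτ : τ = sInf {t : ℝ | 0 < t ∧ (r t = l t ∨ Function.leftLim r t = Function.leftLim l t)})
    (hτpos : 0 < τ)
    (K : Set ℤ) (hK : K.OrdConnected) (s : ℤ → ℝ)
    (hs : StrictMonoOn s K) (hsτ : ∀ k ∈ K, s k ∈ Set.Icc 0 τ)
    (c₁ : ℝ)
    (hmin : ∀ k : ℤ, k ∈ K → k + 1 ∈ K →
      min (r (s (k + 1)) - l (s k)) (r (s k) - l (s (k + 1)))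
        ≤ c₁ * Real.sqrt (s (k + 1) - s k))
    (hsum : ∑' k : {k : ℤ // k ∈ K ∧ k + 1 ∈ K},
        ENNReal.ofReal (Real.sqrt (s ((k : ℤ) + 1) - s (k : ℤ))) = ⊤) :
    ∀ᵐ ω ∂(ℙ : Measure Ω), eVariationOn (Y ω) (Set.Icc 0 τ) = ⊤ :=
  local_time_infinite_variation_comb_general B hB l r hl hlr x Y hY τ K hK s hs hsτ c₁ hmin hsum
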